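/- arXiv:1507.02990 — 2 statements merged into one kernel-verified Lean document; each statement's English description precedes it below -/
import Mathlib

section
/- Let d ≥ 2, let 1 ≤ γ_1 ≤ … ≤ γ_{d-1} ≤ β be positive integers, and let p, n be positive integers with gcd(p,n) = 1 and n odd. Then ∏_{k=1}^{βn-1} ( d − e^{2πi p k/(βn)} − ∑_{m=1}^{d-1} e^{2πi (γ_m n + p) k/(βn)} ) = n d^{βn−1} · ( 1 − δ_{β even} · (−1)^p d^{−n} (1 + ∑_{m=1}^{d-1} (−1)^{γ_m})^n ) · ∏_{k=1}^{⌈β/2⌉−1} ( 1 − 2·sgn(d − η_k/2)·|1 − μ_k/d|^n cos( 2πpk/β + n·arctan( (∑_{m=1}^{d-1} sin(2πγ_m k/β)) / (d − η_k/2) ) ) + |1 − μ_k/d|^{2n} ), where sgn(0) is set equal to 1 and when d − η_k/2 = 0 the arctan term is interpreted as its limit sgn(∑_{m=1}^{d-1} sin(2πγ_m k/β))·π/2. -/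
open Finset Real

/-- `μ_k = d − 1 − ∑_{m=1}^{d-1} e^{2πiγ_m k/β}`, the nonzero Laplacian eigenvalues of the
directed circulant graph on `β` vertices with generators `γ_1, …, γ_{d-1}`. -/
noncomputable def dirEig (d β : ℕ) (γ : ℕ → ℕ) (k : ℕ) : ℂ :=
  (d : ℂ) - 1 - ∑ m ∈ Finset.Icc 1 (d - 1), Complex.exp (2 * Real.pi * Complex.I * (γ m) * k / β)

/-- `η_k = 2(d−1) − 2∑_{m=1}^{d-1} cos(2πγ_m k/β)`, the nonzero Laplacian eigenvalues of the
undirected circulant graph on `β` vertices with generators `γ_1, …, γ_{d-1}`. -/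
noncomputable def undirEig (d β : ℕ) (γ : ℕ → ℕ) (k : ℕ) : ℝ :=
  2 * ((d : ℝ) - 1) - 2 * ∑ m ∈ Finset.Icc 1 (d - 1), Real.cos (2 * Real.pi * (γ m) * k / β)

/-- The phase `arctan((∑_{m=1}^{d-1} sin(2πγ_m k/β))/(d − η_k/2))`, interpreted, when
`d − η_k/2 = 0`, as its limit `sgn(∑_{m=1}^{d-1} sin(2πγ_m k/β))·π/2`. -/
noncomputable def eigPhase (d β : ℕ) (γ : ℕ → ℕ) (k : ℕ) : ℝ :=
  if (d : ℝ) - undirEig d β γ k / 2 = 0 then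
    Real.sign (∑ m ∈ Finset.Icc 1 (d - 1), Real.sin (2 * Real.pi * (γ m) * k / β)) * Real.pi / 2
  else
    Real.arctan ((∑ m ∈ Finset.Icc 1 (d - 1), Real.sin (2 * Real.pi * (γ m) * k / β))
      / ((d : ℝ) - undirEig d β γ k / 2))

/-- The sign function with the convention `sgn(0) = 1`. -/
noncomputable def sgnOne (x : ℝ) : ℝ := if x < 0 then -1 else 1

/-
Write the `k`-th factor as `d - ξ^{pk} c(k)`, where `ξ = e^{2πi/(βn)}` and `c(k) = d - μ_k`
depends only on `k mod β`. Grouping `k = j + βt` by residue, `ξ^{pβt} = ζ^t` for the primitive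
`n`-th root of unity `ζ = e^{2πip/n}`, so each class collapses through `∏ₜ (x - aζ^t) = x^n - a^n`:
the class `j = 0` contributes `n d^{n-1}`, a class `j ≠ 0` contributes
`d^n - e^{2πipj/β} c(j)^n`. The classes `j` and `β - j` are complex conjugate, so their product is
a squared modulus; writing `c(j) = sgn(Re c(j)) |c(j)| e^{iθ}` with `|θ| ≤ π/2` (the sign survives
the odd power `n`) turns it into the real factor of the statement. For even `β` the self-conjugate
class `β/2` gives the remaining factor.
-/

section Products

theorem Finset.Icc_one_sub_one_eq_Ico {N : ℕ} (hN : N ≠ 0) : Icc 1 (N - 1) = Ico 1 N :=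
  Icc_sub_one_right_eq_Ico_of_not_isMin (by simpa using hN) 1

variable {M : Type*} [CommMonoid M]

theorem Finset.prod_range_mul_eq_prod_prod (f : ℕ → M) (β n : ℕ) :
    ∏ k ∈ range (β * n), f k = ∏ j ∈ range β, ∏ t ∈ range n, f (j + β * t) := by
  rw [prod_comm]
  induction n with
  | zero => simp
  | succ n ih =>
    rw [Nat.mul_succ, prod_range_add, ih, prod_range_succ]
    exact congrArg _ (prod_congr rfl fun j _ => by rw [add_comm])

theorem Finset.prod_Icc_one_mul_sub_one (f : ℕ → M) {β n : ℕ} (hβ : β ≠ 0) (hn : n ≠ 0) :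
    ∏ k ∈ Icc 1 (β * n - 1), f k =
      (∏ t ∈ Icc 1 (n - 1), f (β * t)) * ∏ j ∈ Icc 1 (β - 1), ∏ t ∈ range n, f (j + β * t) := by
  set g := Function.update f 0 1
  have hg : ∀ k ∈ Ico 1 (β * n), g k = f k := fun k hk =>
    Function.update_of_ne (by simp at hk; omega) _ _
  have key := prod_range_mul_eq_prod_prod g β n
  rw [prod_range_eq_mul_Ico _ (by positivity), prod_range_eq_mul_Ico _ (by omega),
    prod_range_eq_mul_Ico _ (by omega)] at key
  simp only [zero_add, mul_zero, g, Function.update_self, one_mul] at key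
  rw [Icc_one_sub_one_eq_Ico (by positivity), Icc_one_sub_one_eq_Ico hn,
    Icc_one_sub_one_eq_Ico hβ, ← prod_congr rfl hg, key]
  congr 1
  · exact prod_congr rfl fun t ht =>
      Function.update_of_ne (mul_ne_zero hβ (by simp at ht; omega)) _ _
  · exact prod_congr rfl fun j hj => prod_congr rfl fun t _ =>
      Function.update_of_ne (by simp at hj; omega) _ _

theorem Finset.prod_Icc_sub_one_eq_mul_prod_mul_reflect (G : ℕ → M) {β : ℕ} (hβ : β ≠ 0) :
    ∏ j ∈ Icc 1 (β - 1), G j =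
      (if Even β then G (β / 2) else 1) * ∏ j ∈ Icc 1 ((β + 1) / 2 - 1), G j * G (β - j) := by
  set m := (β + 1) / 2 - 1
  have hreflect : ∏ j ∈ Ico (β - m) β, G j = ∏ j ∈ Ico 1 (m + 1), G (β - j) := by
    rw [prod_Ico_reflect _ _ (by omega), Nat.add_sub_cancel, Nat.add_sub_add_right]
  have hmiddle : ∏ j ∈ Ico (m + 1) (β - m), G j = if Even β then G (β / 2) else 1 := by
    rcases Nat.even_or_odd' β with ⟨b, rfl | rfl⟩
    · have hm : m + 1 = b := by omega
      rw [hm, show 2 * b - m = b + 1 by omega, Nat.Ico_succ_singleton, prod_singleton,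
        if_pos (even_two_mul b), show 2 * b / 2 = b by omega]
    · rw [if_neg (Nat.not_even_iff_odd.2 (odd_two_mul_add_one b)),
        show 2 * b + 1 - m = m + 1 by omega, Ico_self, prod_empty]
  rw [Icc_one_sub_one_eq_Ico hβ, ← Ico_add_one_right_eq_Icc,
    ← prod_Ico_consecutive _ (by omega : 1 ≤ m + 1) (by omega : m + 1 ≤ β),
    ← prod_Ico_consecutive _ (by omega : m + 1 ≤ β - m) (by omega : β - m ≤ β), hreflect, hmiddle,
    prod_mul_distrib]
  ac_rfl

end Products

theorem IsPrimitiveRoot.prod_range_sub_mul_pow {R : Type*} [CommRing R] [IsDomain R] {ζ : R}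
    {n : ℕ} (hζ : IsPrimitiveRoot ζ n) (hn : 0 < n) (x a : R) :
    ∏ t ∈ range n, (x - a * ζ ^ t) = x ^ n - a ^ n := by
  simpa [Polynomial.eval_prod, mul_comm] using
    (congrArg (Polynomial.eval x) (X_pow_sub_C_eq_prod hζ hn rfl)).symm

theorem IsPrimitiveRoot.prod_Icc_one_sub_pow {R : Type*} [CommRing R] [IsDomain R] {ζ : R}
    {n : ℕ} (hζ : IsPrimitiveRoot ζ n) (hn : 0 < n) :
    ∏ t ∈ Icc 1 (n - 1), (1 - ζ ^ t) = n := by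
  obtain ⟨m, rfl⟩ := Nat.exists_eq_add_of_le' hn
  rw [Nat.add_sub_cancel, ← Ico_add_one_right_eq_Icc, prod_Ico_eq_prod_range]
  simpa [add_comm] using hζ.prod_one_sub_pow_eq_order

section Polar

open Complex

theorem sgnOne_mul_self (x : ℝ) : sgnOne x * sgnOne x = 1 := by
  unfold sgnOne; split_ifs <;> norm_num

theorem sgnOne_pow_of_odd (x : ℝ) {n : ℕ} (hn : Odd n) : sgnOne x ^ n = sgnOne x := by
  unfold sgnOne; split_ifs <;> simp [hn.neg_one_pow]

theorem abs_sgnOne (x : ℝ) : |sgnOne x| = 1 := by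
  unfold sgnOne; split_ifs <;> norm_num

theorem sgnOne_mul_self_eq_abs (x : ℝ) : sgnOne x * x = |x| := by
  unfold sgnOne; split_ifs with h
  · rw [abs_of_neg h]; ring
  · rw [abs_of_nonneg (not_lt.1 h), one_mul]

theorem Complex.arg_of_re_pos {z : ℂ} (h : 0 < z.re) : arg z = Real.arctan (z.im / z.re) := by
  rw [← tan_arg, Real.arctan_tan] <;>
    linarith [abs_lt.1 (abs_arg_lt_pi_div_two_iff.2 (Or.inl h))]

theorem Complex.arg_of_re_eq_zero {z : ℂ} (h : z.re = 0) : arg z = Real.sign z.im * π / 2 := by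
  have hz : z = z.im * I := by apply Complex.ext <;> simp [h]
  rcases lt_trichotomy z.im 0 with him | him | him
  · rw [Real.sign_of_neg him, hz, show (z.im : ℂ) * I = ((-z.im : ℝ) : ℂ) * -I by push_cast; ring,
      arg_real_mul _ (by linarith), arg_neg_I]
    ring
  · rw [him, Real.sign_zero, hz, him]; simp
  · rw [Real.sign_of_pos him, hz, arg_real_mul _ him, arg_I]; ring

theorem arg_sgnOne_re_mul (w : ℂ) :
    arg (sgnOne w.re * w) =
      if w.re = 0 then Real.sign w.im * π / 2 else Real.arctan (w.im / w.re) := by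
  split_ifs with h
  · rw [sgnOne, if_neg (by rw [h]; exact lt_irrefl 0), ofReal_one, one_mul, arg_of_re_eq_zero h]
  · have hre : (sgnOne w.re * w).re = |w.re| := by
      rw [re_ofReal_mul, sgnOne_mul_self_eq_abs]
    have hs : sgnOne w.re ≠ 0 := left_ne_zero_of_mul_eq_one (sgnOne_mul_self w.re)
    rw [arg_of_re_pos (by rw [hre]; exact abs_pos.2 h), re_ofReal_mul, im_ofReal_mul,
      mul_div_mul_left _ _ hs]

theorem sgnOne_re_mul_norm_mul_exp_arg (w : ℂ) :
    (sgnOne w.re : ℂ) * ‖w‖ * cexp (arg (sgnOne w.re * w) * I) = w := by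
  have hnorm : ‖w‖ = ‖(sgnOne w.re : ℂ) * w‖ := by
    rw [norm_mul, norm_real, Real.norm_eq_abs, abs_sgnOne, one_mul]
  rw [hnorm, mul_assoc, norm_mul_exp_arg_mul_I, ← mul_assoc, ← ofReal_mul, sgnOne_mul_self,
    ofReal_one, one_mul]

theorem normSq_ofReal_sub_exp_mul_pow (D α : ℝ) (w : ℂ) {n : ℕ} (hn : Odd n) :
    normSq (D - cexp (α * I) * w ^ n) =
      D ^ 2 - 2 * D * sgnOne w.re * ‖w‖ ^ n * Real.cos (α + n * arg (sgnOne w.re * w))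
        + ‖w‖ ^ (2 * n) := by
  set s := sgnOne w.re
  set θ := arg (s * w)
  have hpolar : cexp (α * I) * w ^ n = ((s * ‖w‖ ^ n : ℝ) : ℂ) * cexp ((α + n * θ : ℝ) * I) := by
    conv_lhs => rw [← sgnOne_re_mul_norm_mul_exp_arg w]
    rw [mul_pow, mul_pow, ← Complex.exp_nat_mul, ← ofReal_pow, sgnOne_pow_of_odd _ hn,
      show ((α + n * θ : ℝ) : ℂ) * I = α * I + n * (θ * I) by push_cast; ring, Complex.exp_add]
    push_cast
    ring
  rw [hpolar, normSq_apply]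
  simp only [sub_re, sub_im, re_ofReal_mul, im_ofReal_mul, exp_ofReal_mul_I_re,
    exp_ofReal_mul_I_im, ofReal_re, ofReal_im]
  have hs := sgnOne_mul_self w.re
  have htrig := Real.sin_sq_add_cos_sq (α + n * θ)
  linear_combination (‖w‖ ^ (2 * n)) * htrig
    + ‖w‖ ^ (2 * n) * (Real.sin (α + n * θ) ^ 2 + Real.cos (α + n * θ) ^ 2) * hs

end Polar

theorem Nat.mul_sub_one_eq_add_ite_even {β n : ℕ} (hβ : β ≠ 0) (hn : n ≠ 0) :
    β * n - 1 = (n - 1) + (if Even β then n else 0) + 2 * n * ((β + 1) / 2 - 1) := by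
  rcases Nat.even_or_odd' β with ⟨b, rfl | rfl⟩
  · obtain ⟨c, rfl⟩ : ∃ c, b = c + 1 := Nat.exists_eq_succ_of_ne_zero (by omega)
    rw [if_pos (even_two_mul _), show (2 * (c + 1) + 1) / 2 - 1 = c by omega]
    have : 2 * (c + 1) * n = n + n + 2 * n * c := by ring
    omega
  · rw [if_neg (Nat.not_even_iff_odd.2 (odd_two_mul_add_one b)),
      show (2 * b + 1 + 1) / 2 - 1 = b by omega]
    have : (2 * b + 1) * n = n + 2 * n * b := by ring
    omega

section CircSymbol

open Complex ComplexConjugate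

theorem exp_two_pi_I_mul_add_mul_div (a j t β : ℕ) :
    cexp (2 * π * I * a * ↑(j + β * t) / β) = cexp (2 * π * I * a * j / β) := by
  rcases eq_or_ne β 0 with rfl | hβ
  · simp
  rw [exp_eq_exp_iff_exists_int]
  exact ⟨a * t, by push_cast; field_simp⟩

theorem conj_exp_two_pi_I_mul_div (a j β : ℕ) (hj : j ≤ β) :
    conj (cexp (2 * π * I * a * j / β)) = cexp (2 * π * I * a * ↑(β - j) / β) := by
  rcases eq_or_ne β 0 with rfl | hβ
  · obtain rfl : j = 0 := by omega
    simp
  rw [← exp_conj, exp_eq_exp_iff_exists_int]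
  refine ⟨-a, ?_⟩
  simp only [map_div₀, map_mul, conj_ofReal, conj_I, map_natCast, map_ofNat]
  push_cast [Nat.cast_sub hj]
  field_simp
  ring

theorem exp_two_pi_I_mul_div_two_mul (a b : ℕ) (hb : b ≠ 0) :
    cexp (2 * π * I * a * b / ↑(2 * b)) = (-1) ^ a := by
  rw [show 2 * π * I * a * b / ↑(2 * b) = a * (π * I) by push_cast; field_simp, Complex.exp_nat_mul,
    exp_pi_mul_I]

theorem exp_two_pi_I_mul_add_mul_div_mul (p j t β n : ℕ) (hβ : β ≠ 0) (hn : n ≠ 0) :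
    cexp (2 * π * I * p * ↑(j + β * t) / (β * n)) =
      cexp (2 * π * I * p * j / (β * n)) * cexp (2 * π * I * (p / n)) ^ t := by
  rw [← Complex.exp_nat_mul, ← Complex.exp_add]
  congr 1
  push_cast
  field_simp

-- The symbol `1 + ∑ₘ z ^ γₘ` at `z = e^{2πik/β}`, that is `d − μ_k`.
noncomputable def circSymbol (d β : ℕ) (γ : ℕ → ℕ) (k : ℕ) : ℂ :=
  1 + ∑ m ∈ Icc 1 (d - 1), cexp (2 * π * I * (γ m) * k / β)

variable (d β : ℕ) (γ : ℕ → ℕ)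

theorem one_sub_dirEig_div (k : ℕ) (hd : (d : ℂ) ≠ 0) :
    1 - dirEig d β γ k / d = circSymbol d β γ k / d := by
  rw [eq_div_iff hd, sub_mul, div_mul_cancel₀ _ hd, dirEig, circSymbol]
  ring

theorem circSymbol_re (k : ℕ) : (circSymbol d β γ k).re = d - undirEig d β γ k / 2 := by
  have hexp : ∀ g : ℕ, cexp (2 * π * I * g * k / β) = cexp ((2 * π * g * k / β : ℝ) * I) :=
    fun g => by push_cast; ring_nf
  simp only [circSymbol, undirEig, hexp, add_re, re_sum, one_re, exp_ofReal_mul_I_re]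
  ring

theorem circSymbol_im (k : ℕ) :
    (circSymbol d β γ k).im = ∑ m ∈ Icc 1 (d - 1), Real.sin (2 * π * (γ m) * k / β) := by
  have hexp : ∀ g : ℕ, cexp (2 * π * I * g * k / β) = cexp ((2 * π * g * k / β : ℝ) * I) :=
    fun g => by push_cast; ring_nf
  simp only [circSymbol, hexp, add_im, im_sum, one_im, exp_ofReal_mul_I_im, zero_add]

theorem eigPhase_eq_arg (k : ℕ) :
    eigPhase d β γ k = arg (sgnOne (circSymbol d β γ k).re * circSymbol d β γ k) := by
  rw [arg_sgnOne_re_mul, circSymbol_re, circSymbol_im, eigPhase]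

theorem circSymbol_add_mul (j t : ℕ) : circSymbol d β γ (j + β * t) = circSymbol d β γ j := by
  simp only [circSymbol, exp_two_pi_I_mul_add_mul_div]

theorem circSymbol_zero (hd : d ≠ 0) : circSymbol d β γ 0 = d := by
  simp [circSymbol, Nat.cast_sub (Nat.one_le_iff_ne_zero.2 hd)]

theorem conj_circSymbol (j : ℕ) (hj : j ≤ β) :
    conj (circSymbol d β γ j) = circSymbol d β γ (β - j) := by
  simp only [circSymbol, map_add, map_one, map_sum, conj_exp_two_pi_I_mul_div _ _ _ hj]

theorem circSymbol_two_mul_self (b : ℕ) (hb : b ≠ 0) :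
    circSymbol d (2 * b) γ b = 1 + ∑ m ∈ Icc 1 (d - 1), (-1 : ℂ) ^ γ m := by
  simp only [circSymbol, exp_two_pi_I_mul_div_two_mul _ _ hb]

end CircSymbol

section BlockFactor

open Complex ComplexConjugate

-- The product of the factors with `k ≡ j (mod β)`.
noncomputable def blockFactor (d β : ℕ) (γ : ℕ → ℕ) (p n j : ℕ) : ℂ :=
  (d : ℂ) ^ n - cexp (2 * π * I * p * j / β) * circSymbol d β γ j ^ n

variable {d β : ℕ} (γ : ℕ → ℕ) {p n : ℕ}

theorem sub_exp_sub_sum_exp_eq_circSymbol (hβ : β ≠ 0) (hn : n ≠ 0) (k : ℕ) :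
    (d : ℂ) - cexp (2 * π * I * p * k / (β * n))
        - ∑ m ∈ Icc 1 (d - 1), cexp (2 * π * I * (γ m * n + p) * k / (β * n)) =
      d - cexp (2 * π * I * p * k / (β * n)) * circSymbol d β γ k := by
  have hsplit : ∀ g : ℕ, cexp (2 * π * I * (g * n + p) * k / (β * n)) =
      cexp (2 * π * I * p * k / (β * n)) * cexp (2 * π * I * g * k / β) := fun g => by
    rw [← Complex.exp_add]
    congr 1
    field_simp
    ring
  simp only [hsplit, ← mul_sum, circSymbol]
  ring

theorem prod_range_sub_exp_mul_circSymbol (hβ : β ≠ 0) (hn : 0 < n) (hpn : p.Coprime n)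
    (j : ℕ) :
    ∏ t ∈ range n, ((d : ℂ) - cexp (2 * π * I * p * ↑(j + β * t) / (β * n))
      * circSymbol d β γ (j + β * t)) = blockFactor d β γ p n j := by
  set ζ := cexp (2 * π * I * (p / n))
  have hfactor : ∀ t, (d : ℂ) - cexp (2 * π * I * p * ↑(j + β * t) / (β * n))
      * circSymbol d β γ (j + β * t) =
        d - cexp (2 * π * I * p * j / (β * n)) * circSymbol d β γ j * ζ ^ t := fun t => by
    rw [exp_two_pi_I_mul_add_mul_div_mul _ _ _ _ _ hβ hn.ne', circSymbol_add_mul]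
    ring
  rw [prod_congr rfl fun t _ => hfactor t,
    (isPrimitiveRoot_exp_of_coprime p n hn.ne' hpn).prod_range_sub_mul_pow hn, mul_pow,
    ← Complex.exp_nat_mul, blockFactor]
  congr 3
  field_simp [hn.ne']

theorem prod_Icc_sub_exp_mul_circSymbol_mul (hd : d ≠ 0) (hβ : β ≠ 0) (hn : 0 < n)
    (hpn : p.Coprime n) :
    ∏ t ∈ Icc 1 (n - 1), ((d : ℂ) - cexp (2 * π * I * p * ↑(β * t) / (β * n))
      * circSymbol d β γ (β * t)) = n * d ^ (n - 1) := by
  set ζ := cexp (2 * π * I * (p / n))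
  have hfactor : ∀ t, (d : ℂ) - cexp (2 * π * I * p * ↑(β * t) / (β * n))
      * circSymbol d β γ (β * t) = d * (1 - ζ ^ t) := fun t => by
    have hexp := exp_two_pi_I_mul_add_mul_div_mul p 0 t β n hβ hn.ne'
    have hsymb := circSymbol_add_mul d β γ 0 t
    simp only [zero_add, Nat.cast_zero, mul_zero, zero_div, Complex.exp_zero, one_mul] at hexp hsymb
    rw [hexp, hsymb, circSymbol_zero _ _ _ hd]
    ring
  rw [prod_congr rfl fun t _ => hfactor t, prod_mul_distrib, prod_const, Nat.card_Icc,
    (isPrimitiveRoot_exp_of_coprime p n hn.ne' hpn).prod_Icc_one_sub_pow hn, Nat.add_sub_cancel]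
  ring

theorem blockFactor_sub {j : ℕ} (hj : j ≤ β) :
    blockFactor d β γ p n (β - j) = conj (blockFactor d β γ p n j) := by
  simp only [blockFactor, map_sub, map_pow, map_natCast, map_mul,
    conj_exp_two_pi_I_mul_div _ _ _ hj, conj_circSymbol _ _ _ _ hj]

theorem blockFactor_mul_blockFactor_sub (hd : d ≠ 0) (hn : Odd n) {j : ℕ} (hj : j ≤ β) :
    blockFactor d β γ p n j * blockFactor d β γ p n (β - j) =
      (d : ℂ) ^ (2 * n) * ((1 - 2 * sgnOne (d - undirEig d β γ j / 2)
        * ‖1 - dirEig d β γ j / d‖ ^ n * Real.cos (2 * π * p * j / β + n * eigPhase d β γ j)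
        + ‖1 - dirEig d β γ j / d‖ ^ (2 * n) : ℝ) : ℂ) := by
  have hdC : (d : ℂ) ≠ 0 := by exact_mod_cast hd
  have hexp : cexp (2 * π * I * p * j / β) = cexp ((2 * π * p * j / β : ℝ) * I) := by
    push_cast
    ring_nf
  rw [blockFactor_sub _ hj, mul_conj, blockFactor, hexp,
    show (d : ℂ) ^ n = ((d ^ n : ℝ) : ℂ) by push_cast; rfl, normSq_ofReal_sub_exp_mul_pow _ _ _ hn,
    one_sub_dirEig_div _ _ _ _ hdC, ← circSymbol_re, eigPhase_eq_arg, norm_div,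
    Complex.norm_natCast, ← ofReal_natCast, ← ofReal_pow, ← ofReal_mul]
  congr 1
  rw [div_pow, div_pow]
  field_simp
  ring

theorem blockFactor_two_mul_self (hd : d ≠ 0) {b : ℕ} (hb : b ≠ 0) :
    blockFactor d (2 * b) γ p n b =
      (d : ℂ) ^ n *
        (1 - (-1) ^ p / (d : ℂ) ^ n * (1 + ∑ m ∈ Icc 1 (d - 1), (-1 : ℂ) ^ γ m) ^ n) := by
  have hdC : (d : ℂ) ≠ 0 := by exact_mod_cast hd
  rw [blockFactor, exp_two_pi_I_mul_div_two_mul _ _ hb, circSymbol_two_mul_self _ _ _ hb]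
  field_simp

end BlockFactor

theorem stmt_1_general (d β p n : ℕ) (γ : ℕ → ℕ) (hd : 2 ≤ d)
    (hβ : 1 ≤ β) (hpn : Nat.gcd p n = 1) (hno : Odd n) :
    ∏ k ∈ Finset.Icc 1 (β * n - 1),
        ((d : ℂ) - Complex.exp (2 * Real.pi * Complex.I * p * k / (β * n))
          - ∑ m ∈ Finset.Icc 1 (d - 1),
              Complex.exp (2 * Real.pi * Complex.I * (γ m * n + p) * k / (β * n)))
      = (n : ℂ) * (d : ℂ) ^ (β * n - 1)
        * (1 - (if Even β then (1 : ℂ) else 0) * (-1) ^ p / (d : ℂ) ^ n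
            * (1 + ∑ m ∈ Finset.Icc 1 (d - 1), (-1 : ℂ) ^ (γ m)) ^ n)
        * ∏ k ∈ Finset.Icc 1 ((β + 1) / 2 - 1),
            (((1 : ℝ)
                - 2 * sgnOne ((d : ℝ) - undirEig d β γ k / 2)
                    * ‖1 - dirEig d β γ k / d‖ ^ n
                    * Real.cos (2 * Real.pi * p * k / β + n * eigPhase d β γ k)
                + ‖1 - dirEig d β γ k / d‖ ^ (2 * n) : ℝ) : ℂ) := by
  have hn : 0 < n := hno.pos
  have hd0 : d ≠ 0 := by omega
  have hβ0 : β ≠ 0 := by omega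
  rw [prod_congr rfl fun k _ => sub_exp_sub_sum_exp_eq_circSymbol γ hβ0 hn.ne' k,
    prod_Icc_one_mul_sub_one _ hβ0 hn.ne', prod_Icc_sub_exp_mul_circSymbol_mul γ hd0 hβ0 hn hpn,
    prod_congr rfl fun j _ => prod_range_sub_exp_mul_circSymbol γ hβ0 hn hpn j,
    prod_Icc_sub_one_eq_mul_prod_mul_reflect _ hβ0,
    prod_congr rfl fun j hj =>
      blockFactor_mul_blockFactor_sub γ hd0 hno (by simp only [mem_Icc] at hj; omega),
    prod_mul_distrib, prod_const, Nat.card_Icc, Nat.add_sub_cancel,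
    Nat.mul_sub_one_eq_add_ite_even hβ0 hn.ne', pow_add, pow_add, pow_mul]
  split_ifs with heven
  · obtain ⟨b, rfl⟩ := even_iff_two_dvd.1 heven
    rw [Nat.mul_div_cancel_left b two_pos, blockFactor_two_mul_self γ hd0 (by omega)]
    ring
  · ring

/-- The number of spanning trees of the directed circulant graph on `βn` vertices with
generators `p, γ_1 n + p, …, γ_{d-1} n + p`, for `gcd(p,n) = 1` and odd `n`, as a product
of `⌈β/2⌉ − 1` explicit factors. -/
theorem stmt_1 (d β p n : ℕ) (γ : ℕ → ℕ) (hd : 2 ≤ d)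
    (hγ1 : ∀ m ∈ Finset.Icc 1 (d - 1), 1 ≤ γ m)
    (hγmono : ∀ m ∈ Finset.Icc 1 (d - 1), ∀ m' ∈ Finset.Icc 1 (d - 1), m ≤ m' → γ m ≤ γ m')
    (hγβ : ∀ m ∈ Finset.Icc 1 (d - 1), γ m ≤ β)
    (hβ : 1 ≤ β) (hp : 1 ≤ p) (hn : 1 ≤ n) (hpn : Nat.gcd p n = 1) (hno : Odd n) :
    ∏ k ∈ Finset.Icc 1 (β * n - 1),
        ((d : ℂ) - Complex.exp (2 * Real.pi * Complex.I * p * k / (β * n))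
          - ∑ m ∈ Finset.Icc 1 (d - 1),
              Complex.exp (2 * Real.pi * Complex.I * (γ m * n + p) * k / (β * n)))
      = (n : ℂ) * (d : ℂ) ^ (β * n - 1)
        * (1 - (if Even β then (1 : ℂ) else 0) * (-1) ^ p / (d : ℂ) ^ n
            * (1 + ∑ m ∈ Finset.Icc 1 (d - 1), (-1 : ℂ) ^ (γ m)) ^ n)
        * ∏ k ∈ Finset.Icc 1 ((β + 1) / 2 - 1),
            (((1 : ℝ)
                - 2 * sgnOne ((d : ℝ) - undirEig d β γ k / 2)
                    * ‖1 - dirEig d β γ k / d‖ ^ n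
                    * Real.cos (2 * Real.pi * p * k / β + n * eigPhase d β γ k)
                + ‖1 - dirEig d β γ k / d‖ ^ (2 * n) : ℝ) : ℂ) :=
  stmt_1_general d β p n γ hd hβ hpn hno
end

section
/- Let 1 ≤ γ ≤ β be positive integers with β odd, and let p, n be positive integers with gcd(p,n) = 1. Then ∏_{k=1}^{βn-1} ( 2 − e^{2πi p k/(βn)} − e^{2πi (γ n + p) k/(βn)} ) = n·2^{βn−1} ∏_{k=1}^{(β−1)/2} ( 1 − 2 cos(2π(p + γn/2)k/β) cos^n(πγk/β) + cos^{2n}(πγk/β) ). (By the matrix tree theorem the left-hand side is the number of spanning trees in the two-generated directed circulant graph on βn vertices with generators p and γn + p.) -/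
open Finset Complex ComplexConjugate
open scoped Real

/-!
The `k`-th factor is `2 (1 - x_k)`, where `x_k` is the mean of the two roots of unity. For the
primitive `n`-th root `ζ = e^{2πip/n}` (primitive as `gcd(p, n) = 1`) one has `x_{r+βj} = ζ^j x_r`,
the second root picking up the harmless factor `e^{2πiγj} = 1`. Grouping `k = r + βj` by residues
mod `β`, each class `r ≠ 0` gives `∏_j (1 - ζ^j x_r) = 1 - x_r^n` and the class `r = 0` gives
`∏_{j=1}^{n-1} (1 - ζ^j) = n`. Finally `x_r^n = cos^n(πγr/β) e^{2πi(p+γn/2)r/β}` and `x_{β-r}^n` is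
its conjugate, so pairing `r` with `β - r` (`β` odd) yields `|1 - x_r^n|^2`, the real factor on the
right.
-/

namespace IsPrimitiveRoot

variable {R : Type*} [CommRing R] [IsDomain R] {ζ : R} {n : ℕ}

open Polynomial in
theorem prod_one_sub_pow_mul (hζ : IsPrimitiveRoot ζ n) (hn : 0 < n) (x : R) :
    ∏ j ∈ range n, (1 - ζ ^ j * x) = 1 - x ^ n := by
  simpa [eval_prod] using (congrArg (eval 1) (X_pow_sub_C_eq_prod hζ hn rfl)).symm

theorem prod_Ico_one_sub_pow (hζ : IsPrimitiveRoot ζ n) (hn : 0 < n) :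
    ∏ j ∈ Ico 1 n, (1 - ζ ^ j) = n := by
  obtain ⟨m, rfl⟩ := Nat.exists_eq_add_of_lt hn
  simpa [prod_Ico_eq_prod_range, add_comm 1] using hζ.prod_one_sub_pow_eq_order

end IsPrimitiveRoot

namespace Finset

variable {M : Type*} [CommMonoid M]

theorem prod_range_mul (f : ℕ → M) (β n : ℕ) :
    ∏ k ∈ range (β * n), f k = ∏ r ∈ range β, ∏ j ∈ range n, f (r + β * j) := by
  induction n with
  | zero => simp
  | succ n ih =>
    rw [mul_add_one, prod_range_add, ih, ← prod_mul_distrib]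
    exact prod_congr rfl fun r _ => by rw [prod_range_succ, add_comm (β * n)]

theorem prod_Ico_one_mul (f : ℕ → M) {β n : ℕ} (hβ : 0 < β) (hn : 0 < n) :
    ∏ k ∈ Ico 1 (β * n), f k
      = (∏ j ∈ Ico 1 n, f (β * j)) * ∏ r ∈ Ico 1 β, ∏ j ∈ range n, f (r + β * j) := by
  have hsplit := prod_range_mul (Function.update f 0 1) β n
  have hupd : ∀ k, 0 < k → Function.update f 0 1 k = f k := fun k hk =>
    Function.update_of_ne hk.ne' _ _
  rw [prod_range_eq_mul_Ico _ (mul_pos hβ hn), prod_range_eq_mul_Ico _ hβ,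
    prod_range_eq_mul_Ico _ hn] at hsplit
  simp only [zero_add, mul_zero, Function.update_self, one_mul] at hsplit
  rwa [prod_congr rfl fun k hk => hupd k (mem_Ico.1 hk).1,
    prod_congr rfl fun j hj => hupd _ (Nat.mul_pos hβ (mem_Ico.1 hj).1),
    prod_congr rfl fun r hr => prod_congr rfl fun j _ =>
      hupd _ (Nat.add_pos_left (mem_Ico.1 hr).1 _)] at hsplit

theorem prod_Ico_one_eq_prod_mul_reflect (g : ℕ → M) {β : ℕ} (hβ : Odd β) :
    ∏ r ∈ Ico 1 β, g r = ∏ r ∈ Icc 1 ((β - 1) / 2), g r * g (β - r) := by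
  obtain ⟨m, rfl⟩ := hβ
  have reflect := prod_Ico_reflect g 1 (m := m + 1) (n := 2 * m + 1) (by omega)
  rw [show 2 * m + 1 + 1 - (m + 1) = m + 1 by omega, Nat.add_sub_cancel] at reflect
  rw [show (2 * m + 1 - 1) / 2 = m by omega, prod_mul_distrib,
    ← prod_Ico_consecutive g (by omega : 1 ≤ m + 1) (by omega), ← reflect, Ico_add_one_right_eq_Icc]

end Finset

theorem Complex.exp_mul_I_add_exp_mul_I_div_two (s t : ℂ) :
    (cexp (s * I) + cexp (t * I)) / 2 = cos ((t - s) / 2) * cexp ((s + t) / 2 * I) := by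
  rw [cos, div_mul_eq_mul_div, add_mul, ← exp_add, ← exp_add]
  ring_nf

theorem Complex.one_sub_mul_one_sub_conj (w : ℂ) :
    (1 - w) * (1 - conj w) = ((1 - 2 * w.re + normSq w : ℝ) : ℂ) := by
  have h := add_conj w
  push_cast at h ⊢
  linear_combination -h + mul_conj w

theorem Complex.re_ofReal_mul_exp_mul_I (c θ : ℝ) :
    ((c : ℂ) * cexp (θ * I)).re = c * Real.cos θ := by
  rw [re_ofReal_mul, exp_ofReal_mul_I_re]

theorem Complex.normSq_ofReal_mul_exp_mul_I (c θ : ℝ) :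
    normSq ((c : ℂ) * cexp (θ * I)) = c ^ 2 := by
  rw [normSq_mul, normSq_ofReal, normSq_eq_norm_sq, norm_exp_ofReal_mul_I]
  ring

section MeanRoot

variable (β γ p n : ℕ)

/-- The `k`-th Laplacian eigenvalue of the circulant graph is `2 * (1 - meanRoot β γ p n k)`. -/
noncomputable def meanRoot (k : ℕ) : ℂ :=
  (cexp (2 * π * I * p * k / (β * n)) + cexp (2 * π * I * (γ * n + p) * k / (β * n))) / 2

theorem meanRoot_zero : meanRoot β γ p n 0 = 1 := by
  simp [meanRoot]

variable {β n}

theorem meanRoot_add_mul (hβ : β ≠ 0) (hn : n ≠ 0) (k j : ℕ) :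
    meanRoot β γ p n (k + β * j) = cexp (2 * π * I * (p / n)) ^ j * meanRoot β γ p n k := by
  have h1 : cexp (2 * π * I * p * ↑(k + β * j) / (β * n))
      = cexp (2 * π * I * (p / n)) ^ j * cexp (2 * π * I * p * k / (β * n)) := by
    rw [← exp_nat_mul, ← exp_add]
    congr 1
    push_cast
    field_simp
    ring
  have h2 : cexp (2 * π * I * (γ * n + p) * ↑(k + β * j) / (β * n))
      = cexp (2 * π * I * (p / n)) ^ j * cexp (2 * π * I * (γ * n + p) * k / (β * n)) := by
    rw [← exp_nat_mul, ← exp_add, ← mul_one (cexp (_ + _)), ← exp_nat_mul_two_pi_mul_I (γ * j),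
      ← exp_add]
    congr 1
    push_cast
    field_simp
    ring
  rw [meanRoot, meanRoot, h1, h2]
  ring

theorem meanRoot_sub (hβ : β ≠ 0) (hn : n ≠ 0) {r : ℕ} (hr : r ≤ β) :
    meanRoot β γ p n (β - r) = cexp (2 * π * I * (p / n)) * conj (meanRoot β γ p n r) := by
  have h1 : cexp (2 * π * I * p * ↑(β - r) / (β * n))
      = cexp (2 * π * I * (p / n)) * conj (cexp (2 * π * I * p * r / (β * n))) := by
    rw [← exp_conj, ← exp_add]
    congr 1
    simp only [Nat.cast_sub hr, map_div₀, map_mul, map_ofNat, conj_ofReal, conj_I, map_natCast]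
    field_simp
    ring
  have h2 : cexp (2 * π * I * (γ * n + p) * ↑(β - r) / (β * n))
      = cexp (2 * π * I * (p / n)) * conj (cexp (2 * π * I * (γ * n + p) * r / (β * n))) := by
    rw [← exp_conj, ← exp_add, ← mul_one (cexp (_ + _)), ← exp_nat_mul_two_pi_mul_I γ, ← exp_add]
    congr 1
    simp only [Nat.cast_sub hr, map_div₀, map_mul, map_ofNat, conj_ofReal, conj_I, map_add,
      map_natCast]
    field_simp
    ring
  rw [meanRoot, meanRoot, h1, h2, map_div₀, map_add, map_ofNat]
  ring

theorem meanRoot_pow (hβ : β ≠ 0) (hn : n ≠ 0) (k : ℕ) :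
    meanRoot β γ p n k ^ n = (Real.cos (π * γ * k / β) ^ n : ℝ)
      * cexp ((2 * π * ((p : ℝ) + γ * n / 2) * k / β : ℝ) * I) := by
  have h : meanRoot β γ p n k = Real.cos (π * γ * k / β)
      * cexp ((2 * π * ((p : ℝ) + γ * n / 2) * k / β / n : ℝ) * I) := by
    rw [meanRoot, ofReal_cos]
    convert exp_mul_I_add_exp_mul_I_div_two (2 * π * p * k / (β * n))
      (2 * π * (γ * n + p) * k / (β * n)) using 4 <;> push_cast <;> field_simp <;> ring
  rw [h, mul_pow, ← exp_nat_mul, ofReal_pow]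
  congr 2
  push_cast
  field_simp

theorem one_sub_meanRoot_pow_mul_one_sub_meanRoot_sub_pow (hβ : β ≠ 0) (hn : n ≠ 0) {r : ℕ}
    (hr : r ≤ β) :
    (1 - meanRoot β γ p n r ^ n) * (1 - meanRoot β γ p n (β - r) ^ n)
      = ((1 - 2 * Real.cos (2 * π * ((p : ℝ) + γ * n / 2) * r / β) * Real.cos (π * γ * r / β) ^ n
          + Real.cos (π * γ * r / β) ^ (2 * n) : ℝ) : ℂ) := by
  have hζ : cexp (2 * π * I * (p / n)) ^ n = 1 := by
    rw [← exp_nat_mul, ← exp_nat_mul_two_pi_mul_I p]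
    congr 1
    field_simp
  rw [meanRoot_sub γ p hβ hn hr, mul_pow, hζ, one_mul, ← map_pow, one_sub_mul_one_sub_conj,
    meanRoot_pow γ p hβ hn, re_ofReal_mul_exp_mul_I, normSq_ofReal_mul_exp_mul_I]
  congr 1
  ring

theorem prod_Ico_one_sub_meanRoot (hβ : 0 < β) (hn : 0 < n) (hpn : p.Coprime n) :
    ∏ k ∈ Ico 1 (β * n), (1 - meanRoot β γ p n k)
      = n * ∏ r ∈ Ico 1 β, (1 - meanRoot β γ p n r ^ n) := by
  have hζ := isPrimitiveRoot_exp_of_coprime p n hn.ne' hpn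
  rw [prod_Ico_one_mul _ hβ hn, ← hζ.prod_Ico_one_sub_pow hn]
  congr 1
  · refine prod_congr rfl fun j _ => ?_
    rw [← zero_add (β * j), meanRoot_add_mul γ p hβ.ne' hn.ne', meanRoot_zero, mul_one]
  · refine prod_congr rfl fun r _ => ?_
    simp_rw [meanRoot_add_mul γ p hβ.ne' hn.ne']
    exact hζ.prod_one_sub_pow_mul hn _

end MeanRoot

theorem stmt_4_general (β γ p n : ℕ) (hβodd : Odd β)
    (hn : 1 ≤ n) (hpn : Nat.gcd p n = 1) :
    ∏ k ∈ Finset.Icc 1 (β * n - 1),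
        ((2 : ℂ) - Complex.exp (2 * Real.pi * Complex.I * p * k / (β * n))
          - Complex.exp (2 * Real.pi * Complex.I * (γ * n + p) * k / (β * n)))
      = (n : ℂ) * 2 ^ (β * n - 1) *
        ∏ k ∈ Finset.Icc 1 ((β - 1) / 2),
          (((1 : ℝ)
              - 2 * Real.cos (2 * Real.pi * ((p : ℝ) + γ * n / 2) * k / β)
                  * Real.cos (Real.pi * γ * k / β) ^ n
              + Real.cos (Real.pi * γ * k / β) ^ (2 * n) : ℝ) : ℂ) := by
  have hβ : 0 < β := hβodd.pos
  have hIcc : Icc 1 (β * n - 1) = Ico 1 (β * n) := by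
    ext k
    simp only [mem_Icc, mem_Ico]
    omega
  calc _ = ∏ k ∈ Ico 1 (β * n), 2 * (1 - meanRoot β γ p n k) := by
        rw [hIcc]
        exact prod_congr rfl fun k _ => by rw [meanRoot]; ring
    _ = n * 2 ^ (β * n - 1) * ∏ r ∈ Ico 1 β, (1 - meanRoot β γ p n r ^ n) := by
        rw [prod_mul_distrib, prod_const, Nat.card_Ico, prod_Ico_one_sub_meanRoot γ p hβ hn hpn]
        ring
    _ = _ := by
        rw [prod_Ico_one_eq_prod_mul_reflect _ hβodd]
        refine congrArg _ (prod_congr rfl fun r hr => ?_)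
        exact one_sub_meanRoot_pow_mul_one_sub_meanRoot_sub_pow γ p hβ.ne' (by omega)
          (by simp only [mem_Icc] at hr; omega)

/-- Number of spanning trees in the two-generated directed circulant graph
`C→^{p, γn+p}_{βn}` for odd `β` and `gcd(p,n) = 1`:
`∏_{k=1}^{βn−1} (2 − e^{2πipk/(βn)} − e^{2πi(γn+p)k/(βn)})
  = n·2^{βn−1} ∏_{k=1}^{(β−1)/2} (1 − 2cos(2π(p+γn/2)k/β)cosⁿ(πγk/β) + cos^{2n}(πγk/β))`. -/
theorem stmt_4 (β γ p n : ℕ) (hγ1 : 1 ≤ γ) (hγβ : γ ≤ β) (hβodd : Odd β)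
    (hp : 1 ≤ p) (hn : 1 ≤ n) (hpn : Nat.gcd p n = 1) :
    ∏ k ∈ Finset.Icc 1 (β * n - 1),
        ((2 : ℂ) - Complex.exp (2 * Real.pi * Complex.I * p * k / (β * n))
          - Complex.exp (2 * Real.pi * Complex.I * (γ * n + p) * k / (β * n)))
      = (n : ℂ) * 2 ^ (β * n - 1) *
        ∏ k ∈ Finset.Icc 1 ((β - 1) / 2),
          (((1 : ℝ)
              - 2 * Real.cos (2 * Real.pi * ((p : ℝ) + γ * n / 2) * k / β)
                  * Real.cos (Real.pi * γ * k / β) ^ n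
              + Real.cos (Real.pi * γ * k / β) ^ (2 * n) : ℝ) : ℂ) :=
  stmt_4_general β γ p n hβodd hn hpn
end
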